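/- arXiv:1410.6663 — 8 statements merged into one kernel-verified Lean document; each statement's English description precedes it below -/
import Mathlib

section
/- If the formula Φ is satisfiable, then the family S(Φ) is evolutionary. Concretely, given a satisfying assignment, the following ordering is evolutionary: first T, then T'; then for each variable x_i, the set L_i if x_i is assigned true and L̄_i otherwise; then for each clause j, the set C_j followed by C_j'; then the verification sets V_1, ..., V_n; and finally, for each variable x_i, the set L̄_i if x_i is assigned true and L_i otherwise. -/
/-- The universe `U` of the reduction: `6n + 5m` elements. `assign i true` is the
assignment element `xᵢ` and `assign i false` is `x̄ᵢ`; `tau` is the trigger element `τ`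
and `trig i b` are the trigger elements `tᵢ, t̄ᵢ`; `free i b` are the free elements
`fᵢ, f̄ᵢ`; `lit i b h` are the literal elements `ℓᵢʰ, ℓ̄ᵢʰ`; `cl j` and `cl' j` are the
clause elements `cⱼ` and `cⱼ'`. -/
inductive Elem (n m k : ℕ) : Type where
  | assign : Fin n → Bool → Elem n m k
  | tau    : Elem n m k
  | trig   : Fin n → Bool → Elem n m k
  | free   : Fin n → Bool → Elem n m k
  | lit    : Fin n → Bool → Fin k → Elem n m k
  | cl     : Fin m → Elem n m k
  | cl'    : Fin m → Elem n m k

/-- Index type for the sets of the family `S(Φ)`: the triggering sets `T` and `T'`, the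
variable sets `L i true = Lᵢ` and `L i false = L̄ᵢ`, the verification sets `V i = Vᵢ`,
and the clause sets `C j = Cⱼ` and `C' j = Cⱼ'`. -/
inductive SetIdx (n m : ℕ) : Type where
  | T  : SetIdx n m
  | T' : SetIdx n m
  | L  : Fin n → Bool → SetIdx n m
  | V  : Fin n → SetIdx n m
  | C  : Fin m → SetIdx n m
  | C' : Fin m → SetIdx n m

/-- The family `S(Φ)` built from a 3-CNF formula `Φ` with `n` variables and `m` clauses,
where `clause j s` is the `s`-th literal of the `j`-th clause (a variable together with a
polarity) and `occ j s` is its occurrence number among the `k` occurrences of that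
literal. `T = {τ}`, `T' = {τ, t₁, t̄₁, …, tₙ, t̄ₙ}`,
`L i b = {xᵢ, tᵢ, fᵢ, ℓᵢ¹, …, ℓᵢᵏ}` (barred version for `b = false`),
`V i = {xᵢ, x̄ᵢ, c₁, c₁', …, c_m, c_m'}`, `C j = {e₁, e₂, e₃, cⱼ}` where `e₁, e₂, e₃`
are the literal elements of the occurrences in clause `j`, and `C' j = {cⱼ, cⱼ'}`. -/
def fam (n m k : ℕ) (clause : Fin m → Fin 3 → Fin n × Bool)
    (occ : Fin m → Fin 3 → Fin k) : SetIdx n m → Set (Elem n m k)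
  | .T      => {Elem.tau}
  | .T'     => {e | e = Elem.tau ∨ ∃ i b, e = Elem.trig i b}
  | .L i b  => {e | e = Elem.assign i b ∨ e = Elem.trig i b ∨ e = Elem.free i b ∨
                    ∃ h, e = Elem.lit i b h}
  | .V i    => {e | e = Elem.assign i true ∨ e = Elem.assign i false ∨
                    (∃ j, e = Elem.cl j) ∨ (∃ j, e = Elem.cl' j)}
  | .C j    => {e | (∃ s : Fin 3, e = Elem.lit (clause j s).1 (clause j s).2 (occ j s)) ∨
                    e = Elem.cl j}
  | .C' j   => {e | e = Elem.cl j ∨ e = Elem.cl' j}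

/-- `pos` describes an evolutionary ordering of the family `S : ι → Set U`: it is an
injective position function (so it linearly orders the sets of the family), each set
brings a new element (it is not contained in the union of the sets placed before it), and
each set except the first (i.e. each set having some set before it) has an old element
(it intersects the union of the sets placed before it). -/
def IsEvolOrdering {U ι : Type*} (S : ι → Set U) (pos : ι → ℕ) : Prop :=
  Function.Injective pos ∧
  (∀ a : ι, ¬ S a ⊆ ⋃ b ∈ {b : ι | pos b < pos a}, S b) ∧
  (∀ a : ι, (∃ b : ι, pos b < pos a) →
    (S a ∩ ⋃ b ∈ {b : ι | pos b < pos a}, S b).Nonempty)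

/-- The concrete ordering from the "if" direction: first `T`, then `T'`; then for each
variable `i` the set `Lᵢ` if `σ i` is true and `L̄ᵢ` otherwise; then `C₁, C₁', …,`
`C_m, C_m'`; then `V₁, …, Vₙ`; finally for each variable `i` the set `L̄ᵢ` if `σ i`
is true and `Lᵢ` otherwise. -/
def evolPos (n m : ℕ) (σ : Fin n → Bool) : SetIdx n m → ℕ
  | .T => 0
  | .T' => 1
  | .L i b => if b = σ i then 2 + i.val else 2 + 2 * n + 2 * m + i.val
  | .C j => 2 + n + 2 * j.val
  | .C' j => 3 + n + 2 * j.val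
  | .V i => 2 + n + 2 * m + i.val

theorem evol_inj (n m : ℕ) (σ : Fin n → Bool) :
    Function.Injective (evolPos n m σ) := by
  rintro (_ | _ | ⟨i, bi⟩ | i | j | j) (_ | _ | ⟨i', bi'⟩ | i' | j' | j') hab <;>
    simp only [evolPos] at hab <;>
    try rfl
  all_goals try split_ifs at hab
  all_goals try have hIi := i.isLt
  all_goals try have hIi' := i'.isLt
  all_goals try have hJj := j.isLt
  all_goals try have hJj' := j'.isLt
  all_goals try (exact absurd hab (by omega))
  all_goals
    first
    | (have hii : i = i' := Fin.ext (by omega); subst hii;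
       first
       | rfl
       | (cases bi <;> cases bi' <;> simp_all))
    | (have hjj : j = j' := Fin.ext (by omega); subst hjj; rfl)

theorem evol_newE (n m k : ℕ) (hn : 0 < n) (clause : Fin m → Fin 3 → Fin n × Bool)
    (occ : Fin m → Fin 3 → Fin k) (σ : Fin n → Bool) :
    ∀ a : SetIdx n m, ¬ fam n m k clause occ a ⊆
      ⋃ b ∈ {b : SetIdx n m | evolPos n m σ b < evolPos n m σ a}, fam n m k clause occ b := by
  rintro (_ | _ | ⟨i, bi⟩ | i | j | j) hsub
  · have h := hsub (show Elem.tau ∈ fam n m k clause occ .T by simp [fam])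
    simp only [Set.mem_iUnion, Set.mem_setOf_eq] at h
    obtain ⟨b, hb, -⟩ := h
    simp only [evolPos] at hb
    omega
  · have h := hsub (show Elem.trig ⟨0, hn⟩ true ∈ fam n m k clause occ .T' by simp [fam])
    simp only [Set.mem_iUnion, Set.mem_setOf_eq] at h
    obtain ⟨b, hb, hb2⟩ := h
    rcases b with _ | _ | ⟨i', b'⟩ | i' | j' | j' <;>
      simp only [evolPos] at hb <;>
      try split_ifs at hb
    all_goals try omega
    all_goals simp [fam] at hb2
  · have h := hsub (show Elem.free i bi ∈ fam n m k clause occ (.L i bi) by simp [fam])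
    simp only [Set.mem_iUnion, Set.mem_setOf_eq] at h
    obtain ⟨b, hb, hb2⟩ := h
    rcases b with _ | _ | ⟨i', b'⟩ | i' | j' | j' <;>
      simp [fam] at hb2
    obtain ⟨h1, h2⟩ := hb2
    subst h1; subst h2
    simp only [evolPos] at hb
    split_ifs at hb <;> omega
  · -- V i : witness assign i (!σ i)
    have h := hsub (show Elem.assign i (!σ i) ∈ fam n m k clause occ (.V i) by
      cases hσ : σ i <;> simp [fam, hσ])
    simp only [Set.mem_iUnion, Set.mem_setOf_eq] at h
    obtain ⟨b, hb, hb2⟩ := h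
    rcases b with _ | _ | ⟨i', b'⟩ | i' | j' | j' <;>
      simp [fam] at hb2
    · obtain ⟨h1, h2⟩ := hb2
      subst h1
      simp only [evolPos] at hb
      have := i.isLt
      have hc : ¬ b' = σ i := by simp [h2]
      rw [if_neg hc] at hb
      omega
    · have h1 : i' = i := by
        rcases hb2 with ⟨h1, -⟩ | ⟨h1, -⟩ <;> exact h1.symm
      subst h1
      simp only [evolPos] at hb
      omega
  · -- C j : witness cl j
    have h := hsub (show Elem.cl j ∈ fam n m k clause occ (.C j) by simp [fam])
    simp only [Set.mem_iUnion, Set.mem_setOf_eq] at h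
    obtain ⟨b, hb, hb2⟩ := h
    have hj := j.isLt
    rcases b with _ | _ | ⟨i', b'⟩ | i' | j' | j' <;>
      simp [fam] at hb2 <;>
      simp only [evolPos] at hb
    · omega
    · subst hb2; omega
    · subst hb2; omega
  · -- C' j : witness cl' j
    have h := hsub (show Elem.cl' j ∈ fam n m k clause occ (.C' j) by simp [fam])
    simp only [Set.mem_iUnion, Set.mem_setOf_eq] at h
    obtain ⟨b, hb, hb2⟩ := h
    have hj := j.isLt
    rcases b with _ | _ | ⟨i', b'⟩ | i' | j' | j' <;>
      simp [fam] at hb2 <;>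
      simp only [evolPos] at hb
    · omega
    · subst hb2; omega

theorem evol_oldE (n m k : ℕ) (clause : Fin m → Fin 3 → Fin n × Bool)
    (occ : Fin m → Fin 3 → Fin k) (σ : Fin n → Bool)
    (hsat : ∀ j : Fin m, ∃ s : Fin 3, σ (clause j s).1 = (clause j s).2) :
    ∀ a : SetIdx n m, (∃ b : SetIdx n m, evolPos n m σ b < evolPos n m σ a) →
      (fam n m k clause occ a ∩
        ⋃ b ∈ {b : SetIdx n m | evolPos n m σ b < evolPos n m σ a},
          fam n m k clause occ b).Nonempty := by
  rintro (_ | _ | ⟨i, bi⟩ | i | j | j) ⟨b0, hb0⟩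
  · simp only [evolPos] at hb0; omega
  · refine ⟨Elem.tau, by simp [fam], Set.mem_biUnion (x := SetIdx.T) (by simp [evolPos]) (by simp [fam])⟩
  · refine ⟨Elem.trig i bi, by simp [fam], Set.mem_biUnion (x := SetIdx.T') ?_ ?_⟩
    · show evolPos n m σ .T' < evolPos n m σ (.L i bi)
      simp only [evolPos]; split_ifs <;> omega
    · exact Or.inr ⟨i, bi, rfl⟩
  · -- V i : assign i (σ i) ∈ L i (σ i)
    refine ⟨Elem.assign i (σ i), by cases hσ : σ i <;> simp [fam, hσ],
      Set.mem_biUnion (x := SetIdx.L i (σ i)) ?_ ?_⟩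
    · show evolPos n m σ (.L i (σ i)) < evolPos n m σ (.V i)
      have h1 : evolPos n m σ (.L i (σ i)) = 2 + i.val := by
        simp [evolPos]
      have h2 : evolPos n m σ (.V i) = 2 + n + 2 * m + i.val := rfl
      have := i.isLt
      omega
    · simp [fam]
  · -- C j
    obtain ⟨s, hs⟩ := hsat j
    refine ⟨Elem.lit (clause j s).1 (clause j s).2 (occ j s),
      by exact Or.inl ⟨s, rfl⟩,
      Set.mem_biUnion (x := SetIdx.L (clause j s).1 (clause j s).2) ?_ ?_⟩
    · show evolPos n m σ (.L (clause j s).1 (clause j s).2) < evolPos n m σ (.C j)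
      have h1 : evolPos n m σ (.L (clause j s).1 (clause j s).2)
          = 2 + ((clause j s).1 : ℕ) := by
        simp only [evolPos]; rw [if_pos hs.symm]
      have h2 : evolPos n m σ (.C j) = 2 + n + 2 * j.val := rfl
      have := (clause j s).1.isLt
      omega
    · exact Or.inr (Or.inr (Or.inr ⟨occ j s, rfl⟩))
  · refine ⟨Elem.cl j, by simp [fam], Set.mem_biUnion (x := SetIdx.C j) ?_ ?_⟩
    · show evolPos n m σ (.C j) < evolPos n m σ (.C' j)
      simp [evolPos]
    · simp [fam]

/-- If the formula `Φ` is satisfiable, then the family `S(Φ)` is evolutionary;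
concretely, given a satisfying assignment `σ`, the ordering `evolPos n m σ` is
evolutionary. -/
theorem evolutionary_of_satisfiable (n m k : ℕ) (hn : 0 < n)
    (clause : Fin m → Fin 3 → Fin n × Bool) (occ : Fin m → Fin 3 → Fin k)
    (hocc : ∀ j s j' s', clause j s = clause j' s' → occ j s = occ j' s' →
      (j, s) = (j', s'))
    (hcount : ∀ (i : Fin n) (b : Bool),
      (Finset.univ.filter fun p : Fin m × Fin 3 => clause p.1 p.2 = (i, b)).card = k)
    (hdup : ∀ j : Fin m, ∃ j' : Fin m, j' ≠ j ∧ ∀ s, clause j' s = clause j s)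
    (h3m : 2 * k * n = 3 * m)
    (σ : Fin n → Bool)
    (hsat : ∀ j : Fin m, ∃ s : Fin 3, σ (clause j s).1 = (clause j s).2) :
    (∃ pos : SetIdx n m → ℕ, IsEvolOrdering (fam n m k clause occ) pos) ∧
    IsEvolOrdering (fam n m k clause occ) (evolPos n m σ) := by
  have key : IsEvolOrdering (fam n m k clause occ) (evolPos n m σ) :=
    ⟨evol_inj n m σ, evol_newE n m k hn clause occ σ, evol_oldE n m k clause occ σ hsat⟩
  exact ⟨⟨_, key⟩, key⟩
end

section
/- If the family S(Φ) is evolutionary, then the formula Φ is satisfiable. Moreover, given any evolutionary ordering of S(Φ), the truth assignment that sets x_i to true if and only if L_i appears before V_i in the ordering satisfies Φ. -/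
/-!
`τ` lies only in `T ⊆ T'`, so `T` comes first and every other set needs an old element.
As `C'ⱼ ⊆ Vᵢ` and `cⱼ, cⱼ'` lie only in `Cⱼ`, `C'ⱼ` and the `Vᵢ`, the old element of `C'ⱼ`
gives `Cⱼ < C'ⱼ < Vᵢ`. Then `cⱼ` cannot be the old element of `Cⱼ`, so some literal
element is, and since occurrences are distinct it lies only in `Cⱼ` and in the variable
set of its literal, which therefore precedes `Cⱼ` and hence the verification set of that
variable. The new element of `Vᵢ` is `xᵢ` or `x̄ᵢ`, so `Lᵢ` and `L̄ᵢ` do not both precede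
`Vᵢ`: the literal found in `Cⱼ` is true under `xᵢ ↦ (Lᵢ before Vᵢ)`.
-/

namespace IsEvolOrdering

variable {U ι : Type*} {S : ι → Set U} {pos : ι → ℕ}

theorem exists_new (hev : IsEvolOrdering S pos) (a : ι) :
    ∃ e ∈ S a, ∀ b, pos b < pos a → e ∉ S b := by
  obtain ⟨e, hea, hne⟩ := Set.not_subset.1 (hev.2.1 a)
  exact ⟨e, hea, fun b hb heb => hne (Set.mem_biUnion hb heb)⟩

theorem exists_old (hev : IsEvolOrdering S pos) {a c : ι} (hc : pos c < pos a) :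
    ∃ e ∈ S a, ∃ b, pos b < pos a ∧ e ∈ S b := by
  obtain ⟨e, hea, heb⟩ := hev.2.2 a ⟨c, hc⟩
  obtain ⟨b, hb, heb⟩ := Set.mem_iUnion₂.1 heb
  exact ⟨e, hea, b, hb, heb⟩

theorem pos_lt_of_subset (hev : IsEvolOrdering S pos) {a b : ι} (hab : a ≠ b)
    (hsub : S a ⊆ S b) : pos a < pos b := by
  refine lt_of_le_of_ne (not_lt.1 fun hba => ?_) (hab ∘ fun h => hev.1 h)
  obtain ⟨e, hea, hne⟩ := hev.exists_new a
  exact hne b hba (hsub hea)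

end IsEvolOrdering

section Reduction

variable {n m k : ℕ} {clause : Fin m → Fin 3 → Fin n × Bool} {occ : Fin m → Fin 3 → Fin k}

open SetIdx

theorem tau_mem_fam_iff {a : SetIdx n m} :
    Elem.tau ∈ fam n m k clause occ a ↔ a = T ∨ a = T' := by
  cases a <;> simp [fam]

theorem cl_mem_fam_iff {a : SetIdx n m} {j : Fin m} :
    Elem.cl j ∈ fam n m k clause occ a ↔ a = C j ∨ a = C' j ∨ ∃ i, a = V i := by
  cases a <;> simp [fam, eq_comm]

theorem cl'_mem_fam_iff {a : SetIdx n m} {j : Fin m} :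
    Elem.cl' j ∈ fam n m k clause occ a ↔ a = C' j ∨ ∃ i, a = V i := by
  cases a <;> simp [fam, eq_comm]

theorem lit_mem_fam_iff {a : SetIdx n m} {i : Fin n} {b : Bool} {h : Fin k} :
    Elem.lit i b h ∈ fam n m k clause occ a ↔
      a = L i b ∨ ∃ j s, a = C j ∧ clause j s = (i, b) ∧ occ j s = h := by
  cases a <;> simp [fam, Prod.ext_iff, eq_comm, and_assoc]

variable {pos : SetIdx n m → ℕ}

theorem pos_T_lt (hev : IsEvolOrdering (fam n m k clause occ) pos) {a : SetIdx n m}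
    (ha : a ≠ T) : pos T < pos a := by
  have hTT' : pos T < pos T' := hev.pos_lt_of_subset (by simp) (by simp [fam])
  refine lt_of_le_of_ne (not_lt.1 fun haT => ?_) (ha ∘ fun h => (hev.1 h).symm)
  obtain ⟨e, he, b, hb, heb⟩ := hev.exists_old haT
  obtain rfl : e = Elem.tau := he
  rcases tau_mem_fam_iff.1 heb with rfl | rfl
  exacts [lt_irrefl _ hb, lt_asymm hb hTT']

theorem pos_C'_lt_V (hev : IsEvolOrdering (fam n m k clause occ) pos) (j : Fin m)
    (i : Fin n) : pos (C' j) < pos (V i) :=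
  hev.pos_lt_of_subset (by simp) fun e he => by rcases he with rfl | rfl <;> simp [fam]

theorem pos_C_lt_C' (hev : IsEvolOrdering (fam n m k clause occ) pos) (j : Fin m) :
    pos (C j) < pos (C' j) := by
  obtain ⟨e, he, b, hb, heb⟩ := hev.exists_old (pos_T_lt hev (a := C' j) (by simp))
  have not_V : ∀ i, b ≠ V i := by
    rintro i rfl
    exact lt_asymm hb (pos_C'_lt_V hev j i)
  rcases he with rfl | rfl
  · rcases cl_mem_fam_iff.1 heb with rfl | rfl | ⟨i, rfl⟩
    exacts [hb, (lt_irrefl _ hb).elim, (not_V i rfl).elim]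
  · rcases cl'_mem_fam_iff.1 heb with rfl | ⟨i, rfl⟩
    exacts [(lt_irrefl _ hb).elim, (not_V i rfl).elim]

theorem exists_pos_L_lt_C (hocc : ∀ j s j' s', clause j s = clause j' s' →
      occ j s = occ j' s' → (j, s) = (j', s'))
    (hev : IsEvolOrdering (fam n m k clause occ) pos) (j : Fin m) :
    ∃ s, pos (L (clause j s).1 (clause j s).2) < pos (C j) := by
  obtain ⟨e, he, b, hb, heb⟩ := hev.exists_old (pos_T_lt hev (a := C j) (by simp))
  rcases he with ⟨s, rfl⟩ | rfl
  · refine ⟨s, ?_⟩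
    rcases lit_mem_fam_iff.1 heb with rfl | ⟨j', s', rfl, hcl, ho⟩
    · exact hb
    · obtain rfl : j' = j := congrArg Prod.fst (hocc j' s' j s hcl ho)
      exact (lt_irrefl _ hb).elim
  · exfalso
    rcases cl_mem_fam_iff.1 heb with rfl | rfl | ⟨i, rfl⟩
    · exact lt_irrefl _ hb
    · exact lt_asymm hb (pos_C_lt_C' hev j)
    · exact lt_asymm hb ((pos_C_lt_C' hev j).trans (pos_C'_lt_V hev j i))

theorem exists_not_pos_L_lt_V (hev : IsEvolOrdering (fam n m k clause occ) pos)
    (i : Fin n) : ∃ b, ¬ pos (L i b) < pos (V i) := by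
  obtain ⟨e, he, hnew⟩ := hev.exists_new (V i)
  rcases he with rfl | rfl | ⟨j, rfl⟩ | ⟨j, rfl⟩
  · exact ⟨true, fun h => hnew _ h (by simp [fam])⟩
  · exact ⟨false, fun h => hnew _ h (by simp [fam])⟩
  · exact (hnew (C j) ((pos_C_lt_C' hev j).trans (pos_C'_lt_V hev j i))
      (by simp [fam])).elim
  · exact (hnew (C' j) (pos_C'_lt_V hev j i) (by simp [fam])).elim

theorem decide_pos_L_true_lt_V (hev : IsEvolOrdering (fam n m k clause occ) pos)
    {i : Fin n} {b : Bool} (h : pos (L i b) < pos (V i)) :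
    decide (pos (L i true) < pos (V i)) = b := by
  obtain ⟨b', hb'⟩ := exists_not_pos_L_lt_V hev i
  cases b
  · cases b'
    · exact (hb' h).elim
    · exact decide_eq_false hb'
  · exact decide_eq_true h

end Reduction

theorem satisfiable_of_evolutionary_general (n m k : ℕ)
    (clause : Fin m → Fin 3 → Fin n × Bool) (occ : Fin m → Fin 3 → Fin k)
    (hocc : ∀ j s j' s', clause j s = clause j' s' → occ j s = occ j' s' →
      (j, s) = (j', s'))
    (pos : SetIdx n m → ℕ)
    (hev : IsEvolOrdering (fam n m k clause occ) pos) :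
    (∃ a : Fin n → Bool, ∀ j : Fin m, ∃ s : Fin 3, a (clause j s).1 = (clause j s).2) ∧
    (∀ j : Fin m, ∃ s : Fin 3,
      decide (pos (SetIdx.L (clause j s).1 true) < pos (SetIdx.V (clause j s).1))
        = (clause j s).2) := by
  have hsat : ∀ j : Fin m, ∃ s : Fin 3,
      decide (pos (SetIdx.L (clause j s).1 true) < pos (SetIdx.V (clause j s).1))
        = (clause j s).2 := fun j => by
    obtain ⟨s, hs⟩ := exists_pos_L_lt_C hocc hev j
    exact ⟨s, decide_pos_L_true_lt_V hev
      (hs.trans ((pos_C_lt_C' hev j).trans (pos_C'_lt_V hev j _)))⟩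
  exact ⟨⟨fun i => decide (pos (SetIdx.L i true) < pos (SetIdx.V i)), hsat⟩, hsat⟩

/-- If the family `S(Φ)` is evolutionary, then `Φ` is satisfiable; moreover, given any
evolutionary ordering `pos` of `S(Φ)`, the assignment setting `xᵢ` to true if and only
if `Lᵢ` appears before `Vᵢ` satisfies `Φ`. -/
theorem satisfiable_of_evolutionary (n m k : ℕ)
    (clause : Fin m → Fin 3 → Fin n × Bool) (occ : Fin m → Fin 3 → Fin k)
    (hocc : ∀ j s j' s', clause j s = clause j' s' → occ j s = occ j' s' →
      (j, s) = (j', s'))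
    (hcount : ∀ (i : Fin n) (b : Bool),
      (Finset.univ.filter fun p : Fin m × Fin 3 => clause p.1 p.2 = (i, b)).card = k)
    (hdup : ∀ j : Fin m, ∃ j' : Fin m, j' ≠ j ∧ ∀ s, clause j' s = clause j s)
    (h3m : 2 * k * n = 3 * m)
    (pos : SetIdx n m → ℕ)
    (hev : IsEvolOrdering (fam n m k clause occ) pos) :
    (∃ a : Fin n → Bool, ∀ j : Fin m, ∃ s : Fin 3, a (clause j s).1 = (clause j s).2) ∧
    (∀ j : Fin m, ∃ s : Fin 3,
      decide (pos (SetIdx.L (clause j s).1 true) < pos (SetIdx.V (clause j s).1))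
        = (clause j s).2) :=
  satisfiable_of_evolutionary_general n m k clause occ hocc pos hev
end

section
/- The family S(Φ) is evolutionary if and only if the formula Φ is satisfiable. -/
section Aux

variable {n m k : ℕ} (clause : Fin m → Fin 3 → Fin n × Bool) (occ : Fin m → Fin 3 → Fin k)

lemma mem_tau_iff (b : SetIdx n m) :
    Elem.tau ∈ fam n m k clause occ b ↔ b = .T ∨ b = .T' := by
  rcases b with _ | _ | ⟨i, b0⟩ | i | j | j <;> simp [fam]

lemma mem_trig_iff (i : Fin n) (b0 : Bool) (b : SetIdx n m) :
    Elem.trig i b0 ∈ fam n m k clause occ b ↔ b = .T' ∨ b = .L i b0 := by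
  rcases b with _ | _ | ⟨i', b'⟩ | i' | j | j <;> cases b0 <;> simp [fam] <;> aesop

lemma mem_free_iff (i : Fin n) (b0 : Bool) (b : SetIdx n m) :
    Elem.free i b0 ∈ fam n m k clause occ b ↔ b = .L i b0 := by
  rcases b with _ | _ | ⟨i', b'⟩ | i' | j | j <;> simp [fam] <;> aesop

lemma mem_assign_iff (i : Fin n) (b0 : Bool) (b : SetIdx n m) :
    Elem.assign i b0 ∈ fam n m k clause occ b ↔ b = .L i b0 ∨ b = .V i := by
  rcases b with _ | _ | ⟨i', b'⟩ | i' | j | j <;> cases b0 <;> simp [fam] <;> aesop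

lemma mem_cl_iff (j : Fin m) (b : SetIdx n m) :
    Elem.cl j ∈ fam n m k clause occ b ↔
      b = .C j ∨ b = .C' j ∨ ∃ i, b = .V i := by
  rcases b with _ | _ | ⟨i', b'⟩ | i' | j' | j' <;> simp [fam] <;> aesop

lemma mem_cl'_iff (j : Fin m) (b : SetIdx n m) :
    Elem.cl' j ∈ fam n m k clause occ b ↔ b = .C' j ∨ ∃ i, b = .V i := by
  rcases b with _ | _ | ⟨i', b'⟩ | i' | j' | j' <;> simp [fam] <;> aesop

lemma mem_lit_iff (i : Fin n) (b0 : Bool) (h : Fin k) (b : SetIdx n m) :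
    Elem.lit i b0 h ∈ fam n m k clause occ b ↔
      b = .L i b0 ∨ ∃ j s, clause j s = (i, b0) ∧ occ j s = h ∧ b = .C j := by
  rcases b with _ | _ | ⟨i', b'⟩ | i' | j' | j' <;> simp [fam, Prod.ext_iff] <;> aesop

/-- The position function witnessing that the family is evolutionary, given a
satisfying assignment `a`. -/
def evPos (n m : ℕ) (a : Fin n → Bool) : SetIdx n m → ℕ
  | .T => 0
  | .T' => 1
  | .L i b => if b = a i then 2 + i.val else 2 + 2*n + 2*m + i.val
  | .C j => 2 + n + j.val
  | .C' j => 2 + n + m + j.val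
  | .V i => 2 + n + 2*m + i.val

lemma evPos_inj (n m : ℕ) (a : Fin n → Bool) : Function.Injective (evPos n m a) := by
  intro x y h
  rcases x with _ | _ | ⟨i, b⟩ | i | j | j <;>
    rcases y with _ | _ | ⟨i', b'⟩ | i' | j' | j' <;>
    simp only [evPos] at h <;> try rfl
  all_goals try split_ifs at h with h1 h2
  all_goals try (exfalso; omega)
  -- remaining: same-constructor cases
  all_goals
    first
    | · have hii : i = i' := by omega
        subst hii
        have hbb : b = b' := by cases b <;> cases b' <;> simp_all
        rw [hbb]
    | · have hii : i = i' := by omega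
        rw [hii]
    | · have hjj : j = j' := by omega
        rw [hjj]

end Aux

/-- The family `S(Φ)` is evolutionary if and only if the formula `Φ` is satisfiable. -/
theorem evolutionary_iff_satisfiable (n m k : ℕ) (hn : 0 < n)
    (clause : Fin m → Fin 3 → Fin n × Bool) (occ : Fin m → Fin 3 → Fin k)
    (hocc : ∀ j s j' s', clause j s = clause j' s' → occ j s = occ j' s' →
      (j, s) = (j', s'))
    (hcount : ∀ (i : Fin n) (b : Bool),
      (Finset.univ.filter fun p : Fin m × Fin 3 => clause p.1 p.2 = (i, b)).card = k)
    (hdup : ∀ j : Fin m, ∃ j' : Fin m, j' ≠ j ∧ ∀ s, clause j' s = clause j s)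
    (h3m : 2 * k * n = 3 * m)
    :
    (∃ pos : SetIdx n m → ℕ, IsEvolOrdering (fam n m k clause occ) pos) ↔
    (∃ a : Fin n → Bool, ∀ j : Fin m, ∃ s : Fin 3, a (clause j s).1 = (clause j s).2) := by
  constructor
  · rintro ⟨pos, hinj, hnew, hold⟩
    have hne : ∀ x y : SetIdx n m, x ≠ y → pos x ≠ pos y :=
      fun x y hxy h => hxy (hinj h)
    have hmem : ∀ (e : Elem n m k) (x : SetIdx n m),
        e ∈ (⋃ b ∈ {b : SetIdx n m | pos b < pos x}, fam n m k clause occ b) ↔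
        ∃ b, pos b < pos x ∧ e ∈ fam n m k clause occ b := by
      intro e x; simp [Set.mem_iUnion]
    -- T is first
    have hTfirst : ∀ x : SetIdx n m, x ≠ SetIdx.T → pos SetIdx.T < pos x := by
      intro x hx
      by_contra hcon
      have hlt : pos x < pos SetIdx.T :=
        lt_of_le_of_ne (not_lt.1 hcon) (hne x _ hx)
      obtain ⟨e, heT, heU⟩ := hold SetIdx.T ⟨x, hlt⟩
      have heq : e = Elem.tau := by simpa [fam] using heT
      subst heq
      rw [hmem] at heU
      obtain ⟨b, hb, hbe⟩ := heU
      rcases (mem_tau_iff clause occ b).1 hbe with rfl | rfl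
      · exact absurd hb (lt_irrefl _)
      · refine hnew SetIdx.T (fun e he => ?_)
        have heq : e = Elem.tau := by simpa [fam] using he
        subst heq
        exact (hmem _ _).2 ⟨SetIdx.T', hb, by simp [fam]⟩
    -- every C' j comes before every V i
    have hC'V : ∀ (j : Fin m) (i : Fin n),
        pos (SetIdx.C' j) < pos (SetIdx.V i) := by
      intro j i
      by_contra hcon
      have hlt : pos (SetIdx.V i) < pos (SetIdx.C' j) :=
        lt_of_le_of_ne (not_lt.1 hcon) (hne _ _ (by simp))
      refine hnew (SetIdx.C' j) (fun e he => ?_)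
      have he' : e = Elem.cl j ∨ e = Elem.cl' j := by simpa [fam] using he
      refine (hmem _ _).2 ⟨SetIdx.V i, hlt, ?_⟩
      rcases he' with rfl | rfl <;> simp [fam]
    -- every C j comes before C' j
    have hCC' : ∀ j : Fin m, pos (SetIdx.C j) < pos (SetIdx.C' j) := by
      intro j
      by_contra hcon
      have hlt : pos (SetIdx.C' j) < pos (SetIdx.C j) :=
        lt_of_le_of_ne (not_lt.1 hcon) (hne _ _ (by simp))
      obtain ⟨e, heC, heU⟩ := hold (SetIdx.C' j) ⟨SetIdx.T, hTfirst _ (by simp)⟩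
      rw [hmem] at heU
      obtain ⟨b, hb, hbe⟩ := heU
      have he' : e = Elem.cl j ∨ e = Elem.cl' j := by simpa [fam] using heC
      rcases he' with rfl | rfl
      · rcases (mem_cl_iff clause occ j b).1 hbe with rfl | rfl | ⟨i, rfl⟩
        · exact absurd hlt (by omega)
        · exact absurd hb (lt_irrefl _)
        · have := hC'V j i; omega
      · rcases (mem_cl'_iff clause occ j b).1 hbe with rfl | ⟨i, rfl⟩
        · exact absurd hb (lt_irrefl _)
        · have := hC'V j i; omega
    -- each clause has a literal whose L-set precedes C j
    have hCj : ∀ j : Fin m, ∃ s : Fin 3,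
        pos (SetIdx.L (clause j s).1 (clause j s).2) < pos (SetIdx.C j) := by
      intro j
      obtain ⟨e, heC, heU⟩ := hold (SetIdx.C j) ⟨SetIdx.T, hTfirst _ (by simp)⟩
      rw [hmem] at heU
      obtain ⟨b, hb, hbe⟩ := heU
      have he' : (∃ s : Fin 3,
          e = Elem.lit (clause j s).1 (clause j s).2 (occ j s)) ∨ e = Elem.cl j := by
        simpa [fam] using heC
      rcases he' with ⟨s, rfl⟩ | rfl
      · rcases (mem_lit_iff clause occ _ _ _ b).1 hbe with rfl | ⟨j', s', hcl, hoc, rfl⟩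
        · exact ⟨s, hb⟩
        · have : (j', s') = (j, s) := hocc j' s' j s (by rw [hcl]) hoc
          obtain ⟨rfl, rfl⟩ := Prod.mk.injEq .. ▸ this
          exact absurd hb (lt_irrefl _)
      · rcases (mem_cl_iff clause occ j b).1 hbe with rfl | rfl | ⟨i, rfl⟩
        · exact absurd hb (lt_irrefl _)
        · have := hCC' j; omega
        · have := hC'V j i; have := hCC' j; omega
    -- define the assignment from the order of the L-pairs
    refine ⟨fun i => decide (pos (SetIdx.L i true) < pos (SetIdx.L i false)), ?_⟩
    intro j
    obtain ⟨s, hs⟩ := hCj j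
    refine ⟨s, ?_⟩
    set v := (clause j s).1 with hv
    set p := (clause j s).2 with hp
    -- key: L v p comes before L v (!p)
    have hkey : pos (SetIdx.L v p) < pos (SetIdx.L v (!p)) := by
      by_contra hcon
      have hlt : pos (SetIdx.L v (!p)) < pos (SetIdx.L v p) :=
        lt_of_le_of_ne (not_lt.1 hcon) (hne _ _ (by simp))
      -- then V v is contained in the union of earlier sets
      refine hnew (SetIdx.V v) (fun e he => ?_)
      have hVv : pos (SetIdx.C j) < pos (SetIdx.V v) := by
        have := hCC' j; have := hC'V j v; omega
      have hLb : ∀ b0 : Bool, pos (SetIdx.L v b0) < pos (SetIdx.V v) := by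
        intro b0
        have h1 : pos (SetIdx.L v p) < pos (SetIdx.V v) := by omega
        have h2 : pos (SetIdx.L v (!p)) < pos (SetIdx.V v) := by omega
        rcases Bool.eq_or_eq_not b0 p with rfl | rfl
        · exact h1
        · exact h2
      have he' : e = Elem.assign v true ∨ e = Elem.assign v false ∨
          (∃ j', e = Elem.cl j') ∨ (∃ j', e = Elem.cl' j') := by simpa [fam] using he
      rcases he' with rfl | rfl | ⟨j', rfl⟩ | ⟨j', rfl⟩
      · exact (hmem _ _).2 ⟨SetIdx.L v true, hLb true, by simp [fam]⟩
      · exact (hmem _ _).2 ⟨SetIdx.L v false, hLb false, by simp [fam]⟩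
      · refine (hmem _ _).2 ⟨SetIdx.C j', ?_, by simp [fam]⟩
        have := hCC' j'; have := hC'V j' v; omega
      · refine (hmem _ _).2 ⟨SetIdx.C' j', hC'V j' v, by simp [fam]⟩
    -- conclude the assignment satisfies the literal
    show decide (pos (SetIdx.L v true) < pos (SetIdx.L v false)) = p
    cases hpt : p
    · rw [hpt] at hkey; simp at hkey
      simp [Nat.not_lt.2 (le_of_lt hkey)]
    · rw [hpt] at hkey; simp at hkey
      simp [hkey]
  · rintro ⟨a, hsat⟩
    refine ⟨evPos n m a, evPos_inj n m a, ?_, ?_⟩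
    · -- new element condition
      intro x hsub
      rcases x with _ | _ | ⟨i, b0⟩ | i | j | j
      · obtain ⟨b, hb, hbe⟩ := Set.mem_iUnion₂.1
          (hsub (show Elem.tau ∈ fam n m k clause occ SetIdx.T by simp [fam]))
        simp only [Set.mem_setOf_eq, evPos] at hb
        exact absurd hb (Nat.not_lt_zero _)
      · obtain ⟨b, hb, hbe⟩ := Set.mem_iUnion₂.1
          (hsub (show Elem.trig ⟨0, hn⟩ true ∈ fam n m k clause occ SetIdx.T' by
            simp [fam]))
        simp only [Set.mem_setOf_eq] at hb
        rcases (mem_trig_iff clause occ _ _ b).1 hbe with rfl | rfl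
        · exact absurd hb (lt_irrefl _)
        · simp only [evPos] at hb
          split_ifs at hb <;> omega
      · obtain ⟨b, hb, hbe⟩ := Set.mem_iUnion₂.1
          (hsub (show Elem.free i b0 ∈ fam n m k clause occ (SetIdx.L i b0) by
            simp [fam]))
        simp only [Set.mem_setOf_eq] at hb
        rcases (mem_free_iff clause occ _ _ b).1 hbe with rfl
        exact absurd hb (lt_irrefl _)
      · obtain ⟨b, hb, hbe⟩ := Set.mem_iUnion₂.1
          (hsub (show Elem.assign i (!a i) ∈ fam n m k clause occ (SetIdx.V i) by
            cases h : a i <;> simp [fam, h]))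
        simp only [Set.mem_setOf_eq] at hb
        rcases (mem_assign_iff clause occ _ _ b).1 hbe with rfl | rfl
        · simp only [evPos] at hb
          split_ifs at hb with h
          · simp at h
          · omega
        · exact absurd hb (lt_irrefl _)
      · obtain ⟨b, hb, hbe⟩ := Set.mem_iUnion₂.1
          (hsub (show Elem.cl j ∈ fam n m k clause occ (SetIdx.C j) by simp [fam]))
        simp only [Set.mem_setOf_eq] at hb
        rcases (mem_cl_iff clause occ _ b).1 hbe with rfl | rfl | ⟨i, rfl⟩
        · exact absurd hb (lt_irrefl _)
        · simp only [evPos] at hb; omega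
        · simp only [evPos] at hb; omega
      · obtain ⟨b, hb, hbe⟩ := Set.mem_iUnion₂.1
          (hsub (show Elem.cl' j ∈ fam n m k clause occ (SetIdx.C' j) by simp [fam]))
        simp only [Set.mem_setOf_eq] at hb
        rcases (mem_cl'_iff clause occ _ b).1 hbe with rfl | ⟨i, rfl⟩
        · exact absurd hb (lt_irrefl _)
        · simp only [evPos] at hb; omega
    · -- old element condition
      rintro x ⟨b0, hb0⟩
      rcases x with _ | _ | ⟨i, b⟩ | i | j | j
      · simp only [evPos] at hb0
        exact absurd hb0 (Nat.not_lt_zero _)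
      · refine ⟨Elem.tau, by simp [fam], Set.mem_iUnion₂.2 ⟨SetIdx.T, ?_, by simp [fam]⟩⟩
        show evPos n m a SetIdx.T < evPos n m a SetIdx.T'
        simp [evPos]
      · refine ⟨Elem.trig i b, by simp [fam],
          Set.mem_iUnion₂.2 ⟨SetIdx.T', ?_, by exact Or.inr ⟨i, b, rfl⟩⟩⟩
        show evPos n m a SetIdx.T' < evPos n m a (SetIdx.L i b)
        simp only [evPos]
        split_ifs <;> omega
      · refine ⟨Elem.assign i (a i), by cases h : a i <;> simp [fam, h],
          Set.mem_iUnion₂.2 ⟨SetIdx.L i (a i), ?_, by simp [fam]⟩⟩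
        show evPos n m a (SetIdx.L i (a i)) < evPos n m a (SetIdx.V i)
        rw [show evPos n m a (SetIdx.L i (a i)) = 2 + i.val by simp [evPos]]
        simp only [evPos]
        omega
      · obtain ⟨s, hs⟩ := hsat j
        refine ⟨Elem.lit (clause j s).1 (clause j s).2 (occ j s),
          by exact Or.inl ⟨s, rfl⟩,
          Set.mem_iUnion₂.2
            ⟨SetIdx.L (clause j s).1 (clause j s).2, ?_, by simp [fam]⟩⟩
        show evPos n m a (SetIdx.L (clause j s).1 (clause j s).2) <
          evPos n m a (SetIdx.C j)
        rw [show evPos n m a (SetIdx.L (clause j s).1 (clause j s).2)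
            = 2 + ((clause j s).1 : ℕ) by simp [evPos, hs.symm]]
        simp only [evPos]
        omega
      · refine ⟨Elem.cl j, by simp [fam],
          Set.mem_iUnion₂.2 ⟨SetIdx.C j, ?_, by simp [fam]⟩⟩
        show evPos n m a (SetIdx.C j) < evPos n m a (SetIdx.C' j)
        simp only [evPos]
        omega
end

section
/- In any evolutionary ordering of the family S(Φ), the set T = {τ} is the first set of the ordering. -/
/-- In any evolutionary ordering of `S(Φ)`, the set `T = {τ}` is the first set. -/
theorem T_is_first (n m k : ℕ)
    (clause : Fin m → Fin 3 → Fin n × Bool) (occ : Fin m → Fin 3 → Fin k)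
    (hocc : ∀ j s j' s', clause j s = clause j' s' → occ j s = occ j' s' →
      (j, s) = (j', s'))
    (hcount : ∀ (i : Fin n) (b : Bool),
      (Finset.univ.filter fun p : Fin m × Fin 3 => clause p.1 p.2 = (i, b)).card = k)
    (hdup : ∀ j : Fin m, ∃ j' : Fin m, j' ≠ j ∧ ∀ s, clause j' s = clause j s)
    (h3m : 2 * k * n = 3 * m)
    (pos : SetIdx n m → ℕ)
    (hev : IsEvolOrdering (fam n m k clause occ) pos) :
    ∀ a : SetIdx n m, pos SetIdx.T ≤ pos a := by
  intro a
  by_contra h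
  push_neg at h
  obtain ⟨hinj, hnew, hold⟩ := hev
  obtain ⟨x, hxT, hxU⟩ := hold SetIdx.T ⟨a, h⟩
  have hx : x = Elem.tau := hxT
  subst hx
  simp only [Set.mem_iUnion, Set.mem_setOf_eq] at hxU
  obtain ⟨b, hb, hbmem⟩ := hxU
  have hb' : b = SetIdx.T' := by
    cases b with
    | T => exact absurd hb (lt_irrefl _)
    | T' => rfl
    | L i bb => simp [fam] at hbmem
    | V i => simp [fam] at hbmem
    | C j => simp [fam] at hbmem
    | C' j => simp [fam] at hbmem
  subst hb'
  apply hnew SetIdx.T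
  intro y hy
  have hy' : y = Elem.tau := hy
  subst hy'
  exact Set.mem_biUnion hb (Or.inl rfl)
end

section
/- In any evolutionary ordering of the family S(Φ), for every clause index 1 ≤ j ≤ m and every variable index 1 ≤ i ≤ n, the set C_j' appears before the verification set V_i. -/
/-- In any evolutionary ordering of `S(Φ)`, every set `Cⱼ'` appears before every
verification set `Vᵢ`. -/
theorem C'_before_V (n m k : ℕ)
    (clause : Fin m → Fin 3 → Fin n × Bool) (occ : Fin m → Fin 3 → Fin k)
    (hocc : ∀ j s j' s', clause j s = clause j' s' → occ j s = occ j' s' →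
      (j, s) = (j', s'))
    (hcount : ∀ (i : Fin n) (b : Bool),
      (Finset.univ.filter fun p : Fin m × Fin 3 => clause p.1 p.2 = (i, b)).card = k)
    (hdup : ∀ j : Fin m, ∃ j' : Fin m, j' ≠ j ∧ ∀ s, clause j' s = clause j s)
    (h3m : 2 * k * n = 3 * m)
    (pos : SetIdx n m → ℕ)
    (hev : IsEvolOrdering (fam n m k clause occ) pos) :
    ∀ (j : Fin m) (i : Fin n), pos (SetIdx.C' j) < pos (SetIdx.V i) := by
  obtain ⟨hinj, hnew, _⟩ := hev
  intro j i
  rcases lt_trichotomy (pos (SetIdx.C' j)) (pos (SetIdx.V i)) with h | h | h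
  · exact h
  · exact absurd (hinj h) (by simp)
  · exfalso
    apply hnew (SetIdx.C' j)
    intro e he
    refine Set.mem_biUnion (show pos (SetIdx.V i) < pos (SetIdx.C' j) from h) ?_
    rcases he with he | he <;> subst he <;> simp [fam]
end

section
/- In any evolutionary ordering of the family S(Φ), for every variable index 1 ≤ i ≤ n, it is not the case that both L_i and L̄_i appear before the verification set V_i. -/
/-- In any evolutionary ordering of `S(Φ)`, for every variable `i` it is not the case
that both `Lᵢ` and `L̄ᵢ` appear before the verification set `Vᵢ`. -/
theorem not_both_L_before_V (n m k : ℕ)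
    (clause : Fin m → Fin 3 → Fin n × Bool) (occ : Fin m → Fin 3 → Fin k)
    (hocc : ∀ j s j' s', clause j s = clause j' s' → occ j s = occ j' s' →
      (j, s) = (j', s'))
    (hcount : ∀ (i : Fin n) (b : Bool),
      (Finset.univ.filter fun p : Fin m × Fin 3 => clause p.1 p.2 = (i, b)).card = k)
    (hdup : ∀ j : Fin m, ∃ j' : Fin m, j' ≠ j ∧ ∀ s, clause j' s = clause j s)
    (h3m : 2 * k * n = 3 * m)
    (pos : SetIdx n m → ℕ)
    (hev : IsEvolOrdering (fam n m k clause occ) pos) :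
    ∀ i : Fin n, ¬ (pos (SetIdx.L i true) < pos (SetIdx.V i) ∧
      pos (SetIdx.L i false) < pos (SetIdx.V i)) := by

  obtain ⟨hinj, hnew, hold⟩ := hev
  intro i ⟨h1, h2⟩
  have hCV : ∀ j : Fin m, pos (SetIdx.C' j) < pos (SetIdx.V i) := by
    intro j
    rcases lt_trichotomy (pos (SetIdx.C' j)) (pos (SetIdx.V i)) with h | h | h
    · exact h
    · exact absurd (hinj h) (by simp)
    · exfalso
      apply hnew (SetIdx.C' j)
      intro e he
      refine Set.mem_biUnion (show pos (SetIdx.V i) < pos (SetIdx.C' j) from h) ?_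
      rcases he with he | he
      · exact Or.inr (Or.inr (Or.inl ⟨j, he⟩))
      · exact Or.inr (Or.inr (Or.inr ⟨j, he⟩))
  apply hnew (SetIdx.V i)
  intro e he
  rcases he with he | he | ⟨j, he⟩ | ⟨j, he⟩
  · exact Set.mem_biUnion h1 (Or.inl he)
  · exact Set.mem_biUnion h2 (Or.inl he)
  · exact Set.mem_biUnion (hCV j) (Or.inl he)
  · exact Set.mem_biUnion (hCV j) (Or.inr he)
end

section
/- In any evolutionary ordering of the family S(Φ), for every clause index 1 ≤ j ≤ m, the set C_j appears before the set C_j'. -/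
/-- In any evolutionary ordering of `S(Φ)`, the set `Cⱼ` appears before the set
`Cⱼ'`. -/
theorem C_before_C' (n m k : ℕ)
    (clause : Fin m → Fin 3 → Fin n × Bool) (occ : Fin m → Fin 3 → Fin k)
    (hocc : ∀ j s j' s', clause j s = clause j' s' → occ j s = occ j' s' →
      (j, s) = (j', s'))
    (hcount : ∀ (i : Fin n) (b : Bool),
      (Finset.univ.filter fun p : Fin m × Fin 3 => clause p.1 p.2 = (i, b)).card = k)
    (hdup : ∀ j : Fin m, ∃ j' : Fin m, j' ≠ j ∧ ∀ s, clause j' s = clause j s)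
    (h3m : 2 * k * n = 3 * m)
    (pos : SetIdx n m → ℕ)
    (hev : IsEvolOrdering (fam n m k clause occ) pos) :
    ∀ j : Fin m, pos (SetIdx.C j) < pos (SetIdx.C' j) := by

  obtain ⟨hinj, hnew, hold⟩ := hev
  set S := fam n m k clause occ with hS
  intro j
  by_contra hlt
  have hneCC : pos (SetIdx.C' j) ≠ pos (SetIdx.C j) := fun h => by
    have := hinj h; simp at this
  have hCC : pos (SetIdx.C' j) < pos (SetIdx.C j) := by omega
  -- only T and T' contain tau
  have htau : ∀ a : SetIdx n m, Elem.tau ∈ S a → a = SetIdx.T ∨ a = SetIdx.T' := by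
    intro a
    cases a <;> simp [hS, fam]
  have hcl : ∀ (a : SetIdx n m) (j' : Fin m), Elem.cl j' ∈ S a →
      a = SetIdx.C j' ∨ a = SetIdx.C' j' ∨ ∃ i, a = SetIdx.V i := by
    intro a j'
    cases a <;> simp [hS, fam] <;> aesop
  have hcl' : ∀ (a : SetIdx n m) (j' : Fin m), Elem.cl' j' ∈ S a →
      a = SetIdx.C' j' ∨ ∃ i, a = SetIdx.V i := by
    intro a j'
    cases a <;> simp [hS, fam] <;> aesop
  -- T comes before T'
  have hTT' : pos SetIdx.T < pos SetIdx.T' := by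
    have hne : pos SetIdx.T ≠ pos SetIdx.T' := fun h => by
      have := hinj h; simp at this
    rcases Nat.lt_or_ge (pos SetIdx.T) (pos SetIdx.T') with h | h
    · exact h
    exfalso
    apply hnew SetIdx.T
    intro x hx
    have hxτ : x = Elem.tau := hx
    subst hxτ
    refine Set.mem_biUnion (show pos SetIdx.T' < pos SetIdx.T by omega) ?_
    simp [hS, fam]
  -- T is the first set
  have hTfirst : ∀ b, ¬ pos b < pos SetIdx.T := by
    intro b hb
    obtain ⟨x, hx1, hx2⟩ := hold SetIdx.T ⟨b, hb⟩
    have hxτ : x = Elem.tau := hx1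
    subst hxτ
    simp only [Set.mem_iUnion, Set.mem_setOf_eq] at hx2
    obtain ⟨c, hc, hcx⟩ := hx2
    rcases htau c hcx with rfl | rfl
    · exact lt_irrefl _ hc
    · omega
  have hTC' : pos SetIdx.T < pos (SetIdx.C' j) := by
    have hne : pos SetIdx.T ≠ pos (SetIdx.C' j) := fun h => by
      have := hinj h; simp at this
    have := hTfirst (SetIdx.C' j)
    omega
  -- some V i comes before C' j
  obtain ⟨x, hx1, hx2⟩ := hold (SetIdx.C' j) ⟨SetIdx.T, hTC'⟩
  simp only [Set.mem_iUnion, Set.mem_setOf_eq] at hx2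
  obtain ⟨c, hc, hcx⟩ := hx2
  have hVi : ∃ i, pos (SetIdx.V i) < pos (SetIdx.C' j) := by
    rcases hx1 with rfl | rfl
    · rcases hcl c j hcx with rfl | rfl | ⟨i, rfl⟩
      · omega
      · exact absurd hc (lt_irrefl _)
      · exact ⟨i, hc⟩
    · rcases hcl' c j hcx with rfl | ⟨i, rfl⟩
      · exact absurd hc (lt_irrefl _)
      · exact ⟨i, hc⟩
  obtain ⟨i, hVi⟩ := hVi
  -- but then C' j brings no new element
  apply hnew (SetIdx.C' j)
  intro x hx
  refine Set.mem_biUnion hVi ?_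
  rcases hx with rfl | rfl <;> simp [hS, fam]
end

section
/- In any evolutionary ordering of the family S(Φ), for every clause index 1 ≤ j ≤ m there exists a literal of the j-th clause such that the variable set corresponding to that literal (L_i if the literal is the positive literal x_i, L̄_i if it is the negative literal x̄_i) appears before the set C_j, and hence before the verification set V_i of the corresponding variable. -/
/-- In any evolutionary ordering of `S(Φ)`, for every clause `j` there is a literal of
the clause (say the `s`-th one, being the variable `(clause j s).1` with polarity
`(clause j s).2`) such that the corresponding variable set (`Lᵢ` for the positive
literal, `L̄ᵢ` for the negative one) appears before `Cⱼ`, and hence before the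
verification set of the corresponding variable. -/
theorem literal_set_before_C (n m k : ℕ)
    (clause : Fin m → Fin 3 → Fin n × Bool) (occ : Fin m → Fin 3 → Fin k)
    (hocc : ∀ j s j' s', clause j s = clause j' s' → occ j s = occ j' s' →
      (j, s) = (j', s'))
    (hcount : ∀ (i : Fin n) (b : Bool),
      (Finset.univ.filter fun p : Fin m × Fin 3 => clause p.1 p.2 = (i, b)).card = k)
    (hdup : ∀ j : Fin m, ∃ j' : Fin m, j' ≠ j ∧ ∀ s, clause j' s = clause j s)
    (h3m : 2 * k * n = 3 * m)
    (pos : SetIdx n m → ℕ)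
    (hev : IsEvolOrdering (fam n m k clause occ) pos) :
    ∀ j : Fin m, ∃ s : Fin 3,
      pos (SetIdx.L (clause j s).1 (clause j s).2) < pos (SetIdx.C j) ∧
      pos (SetIdx.L (clause j s).1 (clause j s).2) < pos (SetIdx.V (clause j s).1) := by
  obtain ⟨hinj, hnew, hold⟩ := hev
  set S := fam n m k clause occ with hSdef
  have hne : ∀ a b : SetIdx n m, a ≠ b → pos a ≠ pos b :=
    fun a b hab h => hab (hinj h)
  -- extract an old element together with an earlier set containing it
  have hold' : ∀ a b : SetIdx n m, pos b < pos a →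
      ∃ x, x ∈ S a ∧ ∃ c, pos c < pos a ∧ x ∈ S c := by
    intro a b hb
    obtain ⟨x, hx1, hx2⟩ := hold a ⟨b, hb⟩
    simp only [Set.mem_iUnion, Set.mem_setOf_eq, exists_prop] at hx2
    exact ⟨x, hx1, hx2⟩
  -- if an earlier set contains a, contradiction with the new-element condition
  have hsub : ∀ a b : SetIdx n m, pos b < pos a → S a ⊆ S b → False := by
    intro a b hb hab
    exact hnew a (hab.trans (Set.subset_biUnion_of_mem (u := fun c => S c) hb))
  -- T is the global minimum
  have hTmin : ∀ a : SetIdx n m, ¬ pos a < pos SetIdx.T := by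
    intro a ha
    obtain ⟨x, hx, c, hc, hxc⟩ := hold' SetIdx.T a ha
    simp only [hSdef, fam, Set.mem_singleton_iff] at hx
    subst hx
    cases c with
    | T => exact absurd hc (lt_irrefl _)
    | T' =>
      refine hsub SetIdx.T SetIdx.T' hc ?_
      intro y hy
      simp only [hSdef, fam, Set.mem_singleton_iff] at hy
      simp [hSdef, fam, hy]
    | L i b => simp [hSdef, fam] at hxc
    | V i => simp [hSdef, fam] at hxc
    | C j => simp [hSdef, fam] at hxc
    | C' j => simp [hSdef, fam] at hxc
  have hT : ∀ a : SetIdx n m, a ≠ SetIdx.T → pos SetIdx.T < pos a := by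
    intro a ha
    rcases lt_trichotomy (pos SetIdx.T) (pos a) with h | h | h
    · exact h
    · exact absurd h.symm (hne a SetIdx.T ha)
    · exact absurd h (hTmin a)
  -- every C' j comes before every V i
  have hC'V : ∀ (j : Fin m) (i : Fin n), pos (SetIdx.C' j) < pos (SetIdx.V i) := by
    intro j i
    rcases lt_trichotomy (pos (SetIdx.C' j)) (pos (SetIdx.V i)) with h | h | h
    · exact h
    · exact absurd h (hne _ _ (by simp))
    · exfalso
      refine hsub (SetIdx.C' j) (SetIdx.V i) h ?_
      rintro x hx
      simp only [hSdef, fam, Set.mem_setOf_eq] at hx ⊢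
      rcases hx with rfl | rfl
      · exact Or.inr (Or.inr (Or.inl ⟨j, rfl⟩))
      · exact Or.inr (Or.inr (Or.inr ⟨j, rfl⟩))
  -- every C j comes before C' j
  have hCC' : ∀ j : Fin m, pos (SetIdx.C j) < pos (SetIdx.C' j) := by
    intro j
    obtain ⟨x, hx, c, hc, hxc⟩ := hold' (SetIdx.C' j) SetIdx.T (hT _ (by simp))
    simp only [hSdef, fam, Set.mem_setOf_eq] at hx
    rcases hx with rfl | rfl
    · cases c with
      | T => simp [hSdef, fam] at hxc
      | T' => simp [hSdef, fam] at hxc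
      | L i b => simp [hSdef, fam] at hxc
      | V i => exact absurd (hc.trans (hC'V j i)) (lt_irrefl _)
      | C j' =>
        simp only [hSdef, fam, Set.mem_setOf_eq, Elem.cl.injEq] at hxc
        rcases hxc with ⟨s, hs⟩ | rfl
        · exact absurd hs (by simp)
        · exact hc
      | C' j' =>
        simp only [hSdef, fam, Set.mem_setOf_eq, Elem.cl.injEq] at hxc
        rcases hxc with rfl | h
        · exact absurd hc (lt_irrefl _)
        · exact absurd h (by simp)
    · cases c with
      | T => simp [hSdef, fam] at hxc
      | T' => simp [hSdef, fam] at hxc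
      | L i b => simp [hSdef, fam] at hxc
      | V i => exact absurd (hc.trans (hC'V j i)) (lt_irrefl _)
      | C j' => simp [hSdef, fam] at hxc
      | C' j' =>
        simp only [hSdef, fam, Set.mem_setOf_eq, Elem.cl'.injEq] at hxc
        rcases hxc with h | rfl
        · exact absurd h (by simp)
        · exact absurd hc (lt_irrefl _)
  -- main claim
  intro j
  obtain ⟨x, hx, c, hc, hxc⟩ := hold' (SetIdx.C j) SetIdx.T (hT _ (by simp))
  simp only [hSdef, fam, Set.mem_setOf_eq] at hx
  rcases hx with ⟨s, rfl⟩ | rfl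
  · -- old element is a literal element
    refine ⟨s, ?_⟩
    cases c with
    | T => simp [hSdef, fam] at hxc
    | T' => simp [hSdef, fam] at hxc
    | V i => simp [hSdef, fam] at hxc
    | C' j' => simp [hSdef, fam] at hxc
    | L i b =>
      simp only [hSdef, fam, Set.mem_setOf_eq, Elem.lit.injEq] at hxc
      rcases hxc with h | h | h | ⟨h', hi, hb, hh⟩
      · exact absurd h (by simp)
      · exact absurd h (by simp)
      · exact absurd h (by simp)
      · subst hi; subst hb
        exact ⟨hc, hc.trans ((hCC' j).trans (hC'V j (clause j s).1))⟩
    | C j' =>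
      exfalso
      simp only [hSdef, fam, Set.mem_setOf_eq, Elem.lit.injEq] at hxc
      rcases hxc with ⟨s', hi, hb, hh⟩ | h
      · have hcl : clause j' s' = clause j s := by
          have := Prod.ext hi.symm hb.symm
          simpa using this
        have := hocc j' s' j s hcl hh.symm
        have hj : j' = j := by
          simpa using congrArg Prod.fst this
        subst hj
        exact absurd hc (lt_irrefl _)
      · exact absurd h (by simp)
  · -- old element is c_j : impossible since all sets containing it come later
    exfalso
    cases c with
    | T => simp [hSdef, fam] at hxc
    | T' => simp [hSdef, fam] at hxc
    | L i b => simp [hSdef, fam] at hxc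
    | V i => exact absurd (hc.trans ((hCC' j).trans (hC'V j i))) (lt_irrefl _)
    | C j' =>
      simp only [hSdef, fam, Set.mem_setOf_eq, Elem.cl.injEq] at hxc
      rcases hxc with ⟨s, hs⟩ | rfl
      · exact absurd hs (by simp)
      · exact absurd hc (lt_irrefl _)
    | C' j' =>
      simp only [hSdef, fam, Set.mem_setOf_eq, Elem.cl.injEq] at hxc
      rcases hxc with rfl | h
      · exact absurd (hc.trans (hCC' j)) (lt_irrefl _)
      · exact absurd h (by simp)
end
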